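/- Let 𝒯^(n) := diag(T_j^(n) : j ∈ ℕ) act in ℰ^(n) := l²(E_j^(n) : j ∈ ℕ) ⊂ ℰ := l²(E_j : j ∈ ℕ). Suppose there is λ ∈ ⋂_{j,n} ρ(T_j^(n)) such that each sequence ((T_j^(n) − λ)⁻¹)_n is discretely compact and sup_n ‖(T_j^(n) − λ)⁻¹‖ → 0 as j → ∞. Then λ ∈ ⋂_n ρ(𝒯^(n)) and ((𝒯^(n) − λ)⁻¹)_n is discretely compact. -/

import Mathlib

/-! The resolvent of `𝒯⁽ⁿ⁾` is the diagonal of the resolvents `(T_j⁽ⁿ⁾ - λ)⁻¹`, a bounded operator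
because their norms are eventually at most `1`. Given a bounded sequence `x_m ∈ ℰ^(φ m)`, the
images `y_m = (𝒯^(φ m) - λ)⁻¹ x_m` have, in each coordinate `j`, a totally bounded set of values
(every subsequence has a convergent subsequence, by discrete compactness of the `j`-th sequence),
and their tails beyond a coordinate `J` are uniformly small, by the uniform decay of
`‖(T_j⁽ⁿ⁾ - λ)⁻¹‖`. A subset of `ℓ²` with these two properties is totally bounded, so `(y_m)` has a
convergent subsequence in the Banach space `ℰ`. -/

open Filter Topology

/-- `R` is the resolvent of the closed operator given by its graph `G`. -/
def IsResolventOfGraph {F : Type*} [NormedAddCommGroup F] [NormedSpace ℂ F]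
    (G : Submodule ℂ (F × F)) (l : ℂ) (R : F →L[ℂ] F) : Prop :=
  (∀ p ∈ G, R (p.2 - l • p.1) = p.1) ∧
  (∀ y : F, (R y, y + l • R y) ∈ G)

/-- Stummel's notion of a **discretely compact sequence** of bounded operators
`A_n ∈ L(E_n)` with `E_n` closed subspaces of the Banach space `E₀` (here the
limit space is all of `E₀`, i.e. `E = E₀`). -/
def DiscretelyCompact {E₀ : Type*} [NormedAddCommGroup E₀] [NormedSpace ℂ E₀]
    (En : ℕ → Submodule ℂ E₀) (A : ∀ n, En n →L[ℂ] En n) : Prop :=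
  ∀ φ : ℕ → ℕ, StrictMono φ →
    ∀ x : ∀ m, En (φ m), (∃ M : ℝ, ∀ m, ‖x m‖ ≤ M) →
      ∃ ψ : ℕ → ℕ, StrictMono ψ ∧ ∃ y : E₀,
        Tendsto (fun m => ((A (φ (ψ m)) (x (ψ m)) : E₀))) atTop (𝓝 y)

open scoped ENNReal

theorem totallyBounded_range_of_forall_subseq_cauchySeq {X : Type*} [UniformSpace X]
    (u : ℕ → X)
    (h : ∀ g : ℕ → ℕ, StrictMono g → ∃ ψ : ℕ → ℕ, StrictMono ψ ∧ CauchySeq (u ∘ g ∘ ψ)) :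
    TotallyBounded (Set.range u) := by
  intro V hV
  by_contra! hcover
  -- values of `u` pairwise outside `V`; their indices have a strictly increasing subsequence
  obtain ⟨k, hk⟩ : ∃ k : ℕ → ℕ, ∀ n, ∀ j ∈ k '' Set.Iio n, (u (k n), u j) ∉ V := by
    refine Set.seq_of_forall_finite_exists (P := fun i T => ∀ j ∈ T, (u i, u j) ∉ V) fun T hT => ?_
    obtain ⟨_, ⟨i, rfl⟩, hi⟩ := Set.not_subset.1 (hcover _ (hT.image u))
    exact ⟨i, fun j hj hV => hi (Set.mem_biUnion (Set.mem_image_of_mem u hj) hV)⟩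
  have hk_inj : k.Injective := by
    refine .of_lt_imp_ne fun m n hmn hkmn => hk n (k m) ⟨m, hmn, rfl⟩ ?_
    rw [hkmn]
    exact refl_mem_uniformity hV
  obtain ⟨θ, hθ, hkθ⟩ := strictMono_subseq_of_tendsto_atTop hk_inj.nat_tendsto_atTop
  obtain ⟨ψ, hψ, hcauchy⟩ := h (k ∘ θ) hkθ
  obtain ⟨N, hN⟩ := hcauchy.mem_entourage hV
  exact hk _ _ ⟨_, (hθ.comp hψ) N.lt_succ_self, rfl⟩ (hN (N + 1) N N.le_succ le_rfl)

theorem Metric.totallyBounded_of_forall_exists_dist_le {X : Type*} [PseudoMetricSpace X]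
    {s : Set X} (h : ∀ ε > 0, ∃ K : Set X, TotallyBounded K ∧ ∀ x ∈ s, ∃ y ∈ K, dist x y ≤ ε) :
    TotallyBounded s := by
  refine Metric.totallyBounded_iff.2 fun ε hε => ?_
  obtain ⟨K, hK, hsK⟩ := h (ε / 2) (half_pos hε)
  obtain ⟨t, ht, hKt⟩ := Metric.totallyBounded_iff.1 hK (ε / 2) (half_pos hε)
  refine ⟨t, ht, fun x hx => ?_⟩
  obtain ⟨y, hyK, hxy⟩ := hsK x hx
  obtain ⟨z, hzt, hyz⟩ := Set.mem_iUnion₂.1 (hKt hyK)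
  refine Set.mem_iUnion₂.2 ⟨z, hzt, ?_⟩
  rw [Metric.mem_ball] at hyz ⊢
  linarith [dist_triangle x y z]

theorem DiscretelyCompact.totallyBounded_range {E₀ : Type*} [NormedAddCommGroup E₀]
    [NormedSpace ℂ E₀] {En : ℕ → Submodule ℂ E₀} {A : ∀ n, En n →L[ℂ] En n}
    (hA : DiscretelyCompact En A) {φ : ℕ → ℕ} (hφ : StrictMono φ) {x : ∀ m, En (φ m)} {M : ℝ}
    (hx : ∀ m, ‖x m‖ ≤ M) : TotallyBounded (Set.range fun m => (A (φ m) (x m) : E₀)) := by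
  refine totallyBounded_range_of_forall_subseq_cauchySeq _ fun g hg => ?_
  obtain ⟨ψ, hψ, _, hlim⟩ := hA (φ ∘ g) (hφ.comp hg) (fun m => x (g m)) ⟨M, fun m => hx (g m)⟩
  exact ⟨ψ, hψ, hlim.cauchySeq⟩

namespace lp

variable {ι : Type*} {E F : ι → Type*} [∀ i, NormedAddCommGroup (E i)]
  [∀ i, NormedAddCommGroup (F i)] {p : ℝ≥0∞}

theorem norm_le_mul_of_forall_le (hp : p ≠ 0) {x : lp E p} {y : lp F p} {c : ℝ} (hc : 0 ≤ c)
    (h : ∀ i, ‖x i‖ ≤ c * ‖y i‖) : ‖x‖ ≤ c * ‖y‖ :=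
  calc ‖x‖ ≤ ‖c • toNorm y‖ := norm_mono hp fun i => by simpa [abs_of_nonneg hc] using h i
    _ = c * ‖y‖ := by rw [norm_const_smul hp, norm_toNorm, Real.norm_of_nonneg hc]

theorem norm_sub_sum_single_le [DecidableEq ι] (hp : p ≠ 0) {x : lp E p} {y : lp F p}
    (s : Finset ι) {c : ℝ} (hc : 0 ≤ c) (h : ∀ i ∉ s, ‖x i‖ ≤ c * ‖y i‖) :
    ‖x - ∑ i ∈ s, lp.single p i (x i)‖ ≤ c * ‖y‖ := by
  refine norm_le_mul_of_forall_le hp hc fun i => ?_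
  by_cases hi : i ∈ s
  all_goals simp only [lp.coeFn_sub, lp.coeFn_sum, lp.coeFn_single, Pi.sub_apply,
    Finset.sum_apply, Finset.sum_pi_single, hi, if_true, if_false, sub_self, sub_zero]
  · simpa using mul_nonneg hc (norm_nonneg _)
  · exact h i hi

variable {𝕜 : Type*} [NontriviallyNormedField 𝕜] [∀ i, NormedSpace 𝕜 (E i)]
  [∀ i, NormedSpace 𝕜 (F i)]

theorem memℓp_diagonal (A : ∀ i, E i →L[𝕜] F i) (hA : BddAbove (Set.range fun i => ‖A i‖))
    (f : lp E p) : Memℓp (fun i => A i (f i)) p :=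
  ((lp.memℓp f).norm.const_mul (⨆ i, ‖A i‖)).mono fun i =>
    (A i).le_of_opNorm_le (le_ciSup hA i) (f i)

variable [Fact (1 ≤ p)]

theorem totallyBounded_of_small_tails [DecidableEq ι] [∀ i, CompleteSpace (E i)]
    {S : Set (lp E p)} (hcoord : ∀ i, TotallyBounded ((fun f : lp E p => f i) '' S))
    (htail : ∀ ε > 0, ∃ s : Finset ι, ∀ f ∈ S, ‖f - ∑ i ∈ s, lp.single p i (f i)‖ ≤ ε) :
    TotallyBounded S := by
  refine Metric.totallyBounded_of_forall_exists_dist_le fun ε hε => ?_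
  obtain ⟨s, hs⟩ := htail ε hε
  let truncate : (∀ i, E i) → lp E p := fun c => ∑ i ∈ s, lp.single p i (c i)
  have htruncate : Continuous truncate :=
    continuous_finsetSum _ fun i _ => (isometry_single i).continuous.comp (continuous_apply i)
  have hcompact : IsCompact (Set.univ.pi fun i => closure ((fun f : lp E p => f i) '' S)) :=
    isCompact_univ_pi fun i => (hcoord i).closure.isCompact_of_isClosed isClosed_closure
  refine ⟨_, (hcompact.image htruncate).totallyBounded, fun f hf => ⟨truncate f, ?_, ?_⟩⟩
  · exact Set.mem_image_of_mem _ fun i _ => subset_closure ⟨f, hf, rfl⟩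
  · rw [dist_eq_norm]
    exact hs f hf

noncomputable def diagonal (A : ∀ i, E i →L[𝕜] F i) (hA : BddAbove (Set.range fun i => ‖A i‖)) :
    lp E p →L[𝕜] lp F p :=
  LinearMap.mkContinuous
    { toFun := fun f => ⟨fun i => A i (f i), memℓp_diagonal A hA f⟩
      map_add' := fun f g => by ext i; exact map_add (A i) (f i) (g i)
      map_smul' := fun c f => by ext i; exact map_smul (A i) c (f i) }
    (⨆ i, ‖A i‖) fun f =>
      norm_le_mul_of_forall_le (zero_lt_one.trans_le Fact.out).ne'
        (Real.iSup_nonneg fun _ => norm_nonneg _)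
        fun i => (A i).le_of_opNorm_le (le_ciSup hA i) (f i)

@[simp]
theorem diagonal_apply (A : ∀ i, E i →L[𝕜] F i) (hA : BddAbove (Set.range fun i => ‖A i‖))
    (f : lp E p) (i : ι) : diagonal A hA f i = A i (f i) :=
  rfl

end lp

theorem isResolventOfGraph_diagonal {ι : Type*} {E : ι → Type*} [∀ i, NormedAddCommGroup (E i)]
    [∀ i, NormedSpace ℂ (E i)] {p : ℝ≥0∞} [Fact (1 ≤ p)] {G : ∀ i, Submodule ℂ (E i × E i)}
    {l : ℂ} {R : ∀ i, E i →L[ℂ] E i} (hR : BddAbove (Set.range fun i => ‖R i‖))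
    (hres : ∀ i, IsResolventOfGraph (G i) l (R i)) {Gdiag : Submodule ℂ (lp E p × lp E p)}
    (hGdiag : ∀ q, q ∈ Gdiag ↔ ∀ i, (q.1 i, q.2 i) ∈ G i) :
    IsResolventOfGraph Gdiag l (lp.diagonal R hR) := by
  constructor
  · intro q hq
    ext i
    rw [lp.diagonal_apply, lp.coeFn_sub, lp.coeFn_smul]
    exact (hres i).1 _ ((hGdiag q).1 hq i)
  · intro y
    refine (hGdiag _).2 fun i => ?_
    rw [lp.coeFn_add, lp.coeFn_smul]
    exact (hres i).2 (y i)

section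

variable {Ej : ℕ → Type*} [∀ j, NormedAddCommGroup (Ej j)]
  [∀ j, NormedSpace ℂ (Ej j)] [∀ j, CompleteSpace (Ej j)]
  (Ejn : ∀ j : ℕ, ℕ → Submodule ℂ (Ej j))
  (Tjn : ∀ j n : ℕ, ↥(Ejn j n) →ₗ.[ℂ] ↥(Ejn j n))

/-- The graph of the infinite diagonal operator matrix
`𝒯⁽ⁿ⁾ = diag(T_j⁽ⁿ⁾ : j ∈ ℕ)` acting in `ℰ⁽ⁿ⁾ = l²(E_j⁽ⁿ⁾ : j ∈ ℕ)`,
with its natural maximal domain. -/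
noncomputable def diagGraphLp (n : ℕ) :
    Submodule ℂ (↥(lp (fun j => ↥(Ejn j n)) 2) × ↥(lp (fun j => ↥(Ejn j n)) 2)) where
  carrier := {p | ∀ j : ℕ, (p.1 j, p.2 j) ∈ (Tjn j n).graph}
  add_mem' := fun hp hq j => (Tjn j n).graph.add_mem (hp j) (hq j)
  zero_mem' := fun j => (Tjn j n).graph.zero_mem
  smul_mem' := fun c _ hp j => (Tjn j n).graph.smul_mem c (hp j)

/-- The inclusion `ℰ⁽ⁿ⁾ = l²(E_j⁽ⁿ⁾ : j) ↪ ℰ = l²(E_j : j)`. -/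
noncomputable def inclLp (n : ℕ) (v : ↥(lp (fun j => ↥(Ejn j n)) 2)) : ↥(lp Ej 2) :=
  ⟨fun j => ((v j : Ej j)), by
    refine memℓp_gen ?_
    have h2 : (0 : ℝ) < (2 : ENNReal).toReal := by norm_num
    have hv := (memℓp_gen_iff h2).mp (lp.memℓp v)
    simpa using hv⟩

theorem totallyBounded_range_inclLp_diagonal (Rjn : ∀ j n : ℕ, ↥(Ejn j n) →L[ℂ] ↥(Ejn j n))
    (hdc : ∀ j, DiscretelyCompact (Ejn j) (Rjn j))
    (hdecay : ∀ ε : ℝ, 0 < ε → ∃ J : ℕ, ∀ j, J ≤ j → ∀ n, ‖Rjn j n‖ ≤ ε)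
    (hbdd : ∀ n, BddAbove (Set.range fun j => ‖Rjn j n‖)) {φ : ℕ → ℕ} (hφ : StrictMono φ)
    (x : ∀ m, ↥(lp (fun j => ↥(Ejn j (φ m))) 2)) {M : ℝ} (hM : ∀ m, ‖x m‖ ≤ M) :
    TotallyBounded (Set.range fun m =>
      inclLp Ejn (φ m) (lp.diagonal (fun j => Rjn j (φ m)) (hbdd (φ m)) (x m))) := by
  refine lp.totallyBounded_of_small_tails (fun j => ?_) fun ε hε => ?_
  · rw [← Set.range_comp]
    exact (hdc j).totallyBounded_range hφ fun m =>
      (lp.norm_apply_le_norm two_ne_zero (x m) j).trans (hM m)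
  · have hM₀ : 0 ≤ M := (norm_nonneg _).trans (hM 0)
    obtain ⟨J, hJ⟩ := hdecay (ε / (M + 1)) (by positivity)
    refine ⟨Finset.range J, ?_⟩
    rintro _ ⟨m, rfl⟩
    calc _ ≤ ε / (M + 1) * ‖x m‖ := by
          refine lp.norm_sub_sum_single_le two_ne_zero _ (by positivity) fun j hj => ?_
          exact (Rjn j (φ m)).le_of_opNorm_le (hJ j (by simpa using hj) (φ m)) (x m j)
      _ ≤ ε / (M + 1) * (M + 1) := by gcongr; linarith [hM m]
      _ = ε := div_mul_cancel₀ ε (by positivity)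

theorem stmt15
    (l : ℂ) (Rjn : ∀ j n : ℕ, ↥(Ejn j n) →L[ℂ] ↥(Ejn j n))
    (hRjn : ∀ j n, IsResolventOfGraph ((Tjn j n).graph) l (Rjn j n))
    (hdc : ∀ j, DiscretelyCompact (Ejn j) (Rjn j))
    (hdecay : ∀ ε : ℝ, 0 < ε → ∃ J : ℕ, ∀ j, J ≤ j → ∀ n, ‖Rjn j n‖ ≤ ε) :
    ∃ R : ∀ n, ↥(lp (fun j => ↥(Ejn j n)) 2) →L[ℂ] ↥(lp (fun j => ↥(Ejn j n)) 2),
      (∀ n, IsResolventOfGraph (diagGraphLp Ejn Tjn n) l (R n)) ∧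
      (∀ φ : ℕ → ℕ, StrictMono φ →
        ∀ x : ∀ m, ↥(lp (fun j => ↥(Ejn j (φ m))) 2),
          (∃ M : ℝ, ∀ m, ‖x m‖ ≤ M) →
          ∃ ψ : ℕ → ℕ, StrictMono ψ ∧ ∃ y : ↥(lp Ej 2),
            Tendsto (fun m =>
              inclLp Ejn (φ (ψ m)) (R (φ (ψ m)) (x (ψ m)))) atTop (𝓝 y)) := by
  have hbdd : ∀ n, BddAbove (Set.range fun j => ‖Rjn j n‖) := by
    obtain ⟨J, hJ⟩ := hdecay 1 one_pos
    exact fun n => (isBoundedUnder_of_eventually_le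
      (eventually_atTop.2 ⟨J, fun j hj => hJ j hj n⟩)).bddAbove_range
  refine ⟨fun n => lp.diagonal (fun j => Rjn j n) (hbdd n),
    fun n => isResolventOfGraph_diagonal (hbdd n) (fun j => hRjn j n) fun _ => Iff.rfl, ?_⟩
  rintro φ hφ x ⟨M, hM⟩
  have hrange := totallyBounded_range_inclLp_diagonal Ejn Rjn hdc hdecay hbdd hφ x hM
  obtain ⟨y, -, ψ, hψ, hy⟩ := (hrange.closure.isCompact_of_isClosed isClosed_closure).tendsto_subseq
    fun m => subset_closure (Set.mem_range_self m)
  exact ⟨ψ, hψ, y, hy⟩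

end
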